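/- arXiv:2111.10977 — 2 statements merged into one kernel-verified Lean document; each statement's English description precedes it below -/
import Mathlib

section
/- Let n ≥ 1, c ∈ ℝ, a ∈ ℝ, and let T > 0 with T ≤ π/(2√c) if c > 0. Suppose λ : (0,T) → ℝ is C¹ and ψ : (0,T) → ℝ is C² with λ'(t) + λ(t)²/n + (nc − ψ''(t)) ≤ 0 on (0,T), ψ'(t) ≥ −a on (0,T), and lim_{t→0⁺} s_c(t)²·(λ(t) − n s_c'(t)/s_c(t)) ≤ 0. Then λ(t) − ψ'(t) ≤ n·s_c'(t)/s_c(t) + a for all t ∈ (0,T). -/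
open Real MeasureTheory Set

/-- The comparison function `s_κ`: solution of `f'' + κ f = 0`, `f 0 = 0`, `f' 0 = 1`. -/
noncomputable def sk (κ t : ℝ) : ℝ :=
  if 0 < κ then Real.sin (Real.sqrt κ * t) / Real.sqrt κ
  else if κ = 0 then t
  else Real.sinh (Real.sqrt (-κ) * t) / Real.sqrt (-κ)

noncomputable def skd (κ t : ℝ) : ℝ :=
  if 0 < κ then Real.cos (Real.sqrt κ * t)
  else if κ = 0 then 1
  else Real.cosh (Real.sqrt (-κ) * t)

lemma sk_hasDerivAt (κ t : ℝ) : HasDerivAt (sk κ) (skd κ t) t := by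
  rcases lt_trichotomy 0 κ with hκ | hκ | hκ
  · have hs : (0:ℝ) < Real.sqrt κ := Real.sqrt_pos.2 hκ
    have hf : sk κ = fun t => Real.sin (Real.sqrt κ * t) / Real.sqrt κ := by
      funext x; simp [sk, hκ]
    have h2 : HasDerivAt (fun t : ℝ => Real.sqrt κ * t) (Real.sqrt κ) t := by
      simpa using (hasDerivAt_id t).const_mul (Real.sqrt κ)
    have h1 : HasDerivAt (fun t => Real.sin (Real.sqrt κ * t) / Real.sqrt κ)
        (Real.cos (Real.sqrt κ * t) * Real.sqrt κ / Real.sqrt κ) t :=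
      ((Real.hasDerivAt_sin _).comp t h2).div_const _
    rw [hf]
    convert h1 using 1
    rw [mul_div_assoc, div_self hs.ne', mul_one, skd, if_pos hκ]
  · subst hκ
    have hf : sk 0 = fun t : ℝ => t := by funext x; simp [sk]
    rw [hf, skd]
    simpa using hasDerivAt_id' t
  · have hκ' : ¬ (0 < κ) := not_lt.2 hκ.le
    have hne : κ ≠ 0 := hκ.ne
    have hs : (0:ℝ) < Real.sqrt (-κ) := Real.sqrt_pos.2 (by linarith)
    have hf : sk κ = fun t => Real.sinh (Real.sqrt (-κ) * t) / Real.sqrt (-κ) := by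
      funext x; simp [sk, hκ', hne]
    have h2 : HasDerivAt (fun t : ℝ => Real.sqrt (-κ) * t) (Real.sqrt (-κ)) t := by
      simpa using (hasDerivAt_id t).const_mul (Real.sqrt (-κ))
    have h1 : HasDerivAt (fun t => Real.sinh (Real.sqrt (-κ) * t) / Real.sqrt (-κ))
        (Real.cosh (Real.sqrt (-κ) * t) * Real.sqrt (-κ) / Real.sqrt (-κ)) t :=
      ((Real.hasDerivAt_sinh _).comp t h2).div_const _
    rw [hf]
    convert h1 using 1
    rw [mul_div_assoc, div_self hs.ne', mul_one, skd, if_neg hκ', if_neg hne]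

lemma skd_hasDerivAt (κ t : ℝ) : HasDerivAt (skd κ) (-κ * sk κ t) t := by
  rcases lt_trichotomy 0 κ with hκ | hκ | hκ
  · have hs : (0:ℝ) < Real.sqrt κ := Real.sqrt_pos.2 hκ
    have hss : Real.sqrt κ * Real.sqrt κ = κ := Real.mul_self_sqrt hκ.le
    have hf : skd κ = fun t => Real.cos (Real.sqrt κ * t) := by
      funext x; simp [skd, hκ]
    have h2 : HasDerivAt (fun t : ℝ => Real.sqrt κ * t) (Real.sqrt κ) t := by
      simpa using (hasDerivAt_id t).const_mul (Real.sqrt κ)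
    have h1 : HasDerivAt (fun t => Real.cos (Real.sqrt κ * t))
        (-Real.sin (Real.sqrt κ * t) * Real.sqrt κ) t :=
      (Real.hasDerivAt_cos _).comp t h2
    rw [hf]
    convert h1 using 1
    rw [sk, if_pos hκ]
    field_simp
    linear_combination (1) * Real.sin (Real.sqrt κ * t) * hss
  · subst hκ
    have hf : skd 0 = fun _ : ℝ => (1:ℝ) := by funext x; simp [skd]
    rw [hf, sk]
    simpa using hasDerivAt_const t (1:ℝ)
  · have hκ' : ¬ (0 < κ) := not_lt.2 hκ.le
    have hne : κ ≠ 0 := hκ.ne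
    have hs : (0:ℝ) < Real.sqrt (-κ) := Real.sqrt_pos.2 (by linarith)
    have hss : Real.sqrt (-κ) * Real.sqrt (-κ) = -κ := Real.mul_self_sqrt (by linarith)
    have hf : skd κ = fun t => Real.cosh (Real.sqrt (-κ) * t) := by
      funext x; simp [skd, hκ', hne]
    have h2 : HasDerivAt (fun t : ℝ => Real.sqrt (-κ) * t) (Real.sqrt (-κ)) t := by
      simpa using (hasDerivAt_id t).const_mul (Real.sqrt (-κ))
    have h1 : HasDerivAt (fun t => Real.cosh (Real.sqrt (-κ) * t))
        (Real.sinh (Real.sqrt (-κ) * t) * Real.sqrt (-κ)) t :=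
      (Real.hasDerivAt_cosh _).comp t h2
    rw [hf]
    convert h1 using 1
    rw [sk, if_neg hκ', if_neg hne]
    field_simp
    linear_combination (-1) * Real.sinh (Real.sqrt (-κ) * t) * hss

lemma sk_pos {c t : ℝ} (ht : 0 < t) (htc : 0 < c → Real.sqrt c * t < Real.pi / 2) :
    0 < sk c t := by
  rcases lt_trichotomy 0 c with hc | hc | hc
  · rw [sk, if_pos hc]
    have hs : (0:ℝ) < Real.sqrt c := Real.sqrt_pos.2 hc
    exact div_pos (Real.sin_pos_of_pos_of_lt_pi (by positivity)
      (lt_trans (htc hc) (by linarith [Real.pi_pos]))) hs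
  · rw [sk, if_neg (by simpa [← hc] using lt_irrefl (0:ℝ)), if_pos hc.symm]; exact ht
  · rw [sk, if_neg (not_lt.2 hc.le), if_neg hc.ne]
    have hs : (0:ℝ) < Real.sqrt (-c) := Real.sqrt_pos.2 (by linarith)
    exact div_pos (Real.sinh_pos_iff.2 (by positivity)) hs

lemma skd_pos {c t : ℝ} (ht : 0 < t) (htc : 0 < c → Real.sqrt c * t < Real.pi / 2) :
    0 < skd c t := by
  rcases lt_trichotomy 0 c with hc | hc | hc
  · rw [skd, if_pos hc]
    have h0 : 0 < Real.sqrt c * t := by positivity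
    exact Real.cos_pos_of_mem_Ioo ⟨by linarith [Real.pi_pos], htc hc⟩
  · rw [skd, if_neg (by simpa [← hc] using lt_irrefl (0:ℝ)), if_pos hc.symm]; norm_num
  · rw [skd, if_neg (not_lt.2 hc.le), if_neg hc.ne]
    exact Real.cosh_pos _


/-- Key estimate in the `N = ∞` Bishop–Gromov theorem. -/
theorem stmt_8 (n : ℕ) (hn : 1 ≤ n) (c a T : ℝ) (hT : 0 < T)
    (hTc : 0 < c → T ≤ Real.pi / (2 * Real.sqrt c))
    (lam ψ : ℝ → ℝ)
    (hlam : ContDiffOn ℝ 1 lam (Set.Ioo 0 T))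
    (hψ : ContDiffOn ℝ 2 ψ (Set.Ioo 0 T))
    (hineq : ∀ t ∈ Set.Ioo 0 T,
      deriv lam t + (lam t) ^ 2 / n + ((n : ℝ) * c - deriv (deriv ψ) t) ≤ 0)
    (hψ' : ∀ t ∈ Set.Ioo 0 T, -a ≤ deriv ψ t)
    (hlim : ∃ L ≤ (0:ℝ), Filter.Tendsto
      (fun t => (sk c t) ^ 2 * (lam t - (n : ℝ) * deriv (sk c) t / sk c t))
      (nhdsWithin 0 (Set.Ioi 0)) (nhds L)) :
    ∀ t ∈ Set.Ioo 0 T,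
      lam t - deriv ψ t ≤ (n : ℝ) * deriv (sk c) t / sk c t + a := by
  obtain ⟨L, hL0, hLtend⟩ := hlim
  set N : ℝ := (n : ℝ) with hNdef
  have hN : (0:ℝ) < N := by
    have : 0 < n := hn
    rw [hNdef]; exact_mod_cast this
  have hderiv_sk : ∀ x : ℝ, deriv (sk c) x = skd c x := fun x => (sk_hasDerivAt c x).deriv
  have hbd : ∀ x ∈ Set.Ioo 0 T, 0 < c → Real.sqrt c * x < Real.pi / 2 := by
    intro x hx hc
    have hs : (0:ℝ) < Real.sqrt c := Real.sqrt_pos.2 hc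
    have h1 : x < Real.pi / (2 * Real.sqrt c) := lt_of_lt_of_le hx.2 (hTc hc)
    calc Real.sqrt c * x < Real.sqrt c * (Real.pi / (2 * Real.sqrt c)) := by
          exact mul_lt_mul_of_pos_left h1 hs
      _ = Real.pi / 2 := by field_simp
  have hskpos : ∀ x ∈ Set.Ioo 0 T, 0 < sk c x := fun x hx => sk_pos hx.1 (hbd x hx)
  have hskdpos : ∀ x ∈ Set.Ioo 0 T, 0 < skd c x := fun x hx => skd_pos hx.1 (hbd x hx)
  set h : ℝ → ℝ := fun x => (sk c x) ^ 2 * (lam x - deriv ψ x - a) - N * (sk c x * skd c x)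
    with hhdef
  have hopen : IsOpen (Set.Ioo (0:ℝ) T) := isOpen_Ioo
  have hψ1 : ContDiffOn ℝ 1 (deriv ψ) (Set.Ioo 0 T) :=
    hψ.deriv_of_isOpen hopen (by norm_num)
  have hlamD : ∀ x ∈ Set.Ioo (0:ℝ) T, HasDerivAt lam (deriv lam x) x := fun x hx =>
    ((hlam.contDiffAt (hopen.mem_nhds hx)).differentiableAt one_ne_zero).hasDerivAt
  have hψD : ∀ x ∈ Set.Ioo (0:ℝ) T, HasDerivAt (deriv ψ) (deriv (deriv ψ) x) x := fun x hx =>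
    ((hψ1.contDiffAt (hopen.mem_nhds hx)).differentiableAt one_ne_zero).hasDerivAt
  have hh : ∀ x ∈ Set.Ioo (0:ℝ) T, HasDerivAt h
      ((2 * sk c x * skd c x) * (lam x - deriv ψ x - a)
        + (sk c x) ^ 2 * (deriv lam x - deriv (deriv ψ) x)
        - N * (skd c x * skd c x + sk c x * (-c * sk c x))) x := by
    intro x hx
    have A : HasDerivAt (fun y => (sk c y) ^ 2) (2 * sk c x ^ 1 * skd c x) x := by
      simpa using (sk_hasDerivAt c x).fun_pow 2
    have B : HasDerivAt (fun y => lam y - deriv ψ y - a)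
        (deriv lam x - deriv (deriv ψ) x) x := ((hlamD x hx).sub (hψD x hx)).sub_const a
    have C : HasDerivAt (fun y => N * (sk c y * skd c y))
        (N * (skd c x * skd c x + sk c x * (-c * sk c x))) x :=
      ((sk_hasDerivAt c x).mul (skd_hasDerivAt c x)).const_mul N
    have := (A.fun_mul B).fun_sub C
    exact this.congr_deriv (by ring)
  have hderivh : ∀ x ∈ Set.Ioo (0:ℝ) T, deriv h x ≤ 0 := by
    intro x hx
    rw [(hh x hx).deriv]
    have hs := hskpos x hx
    have hp := hskdpos x hx
    have hq := hψ' x hx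
    have h1 := hineq x hx
    have hc1 : lam x ^ 2 / N * N = lam x ^ 2 := div_mul_cancel₀ _ hN.ne'
    have h1' : N * deriv lam x + lam x ^ 2 + N ^ 2 * c - N * deriv (deriv ψ) x ≤ 0 := by
      have := mul_le_mul_of_nonneg_left h1 hN.le
      nlinarith [this]
    have h2 : 0 ≤ (sk c x) ^ 2 * (-(N * deriv lam x) - lam x ^ 2 - N ^ 2 * c
        + N * deriv (deriv ψ) x) := mul_nonneg (sq_nonneg _) (by linarith)
    have h3 : 0 ≤ N * (sk c x * skd c x) * (deriv ψ x + a) :=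
      mul_nonneg (mul_nonneg hN.le (mul_nonneg hs.le hp.le)) (by linarith)
    nlinarith [sq_nonneg (sk c x * lam x - N * skd c x), h2, h3, hN]
  have hanti : AntitoneOn h (Set.Ioo 0 T) := by
    apply antitoneOn_of_deriv_nonpos (convex_Ioo 0 T)
    · exact fun x hx => (hh x hx).continuousAt.continuousWithinAt
    · rw [interior_Ioo]; exact fun x hx => (hh x hx).differentiableAt.differentiableWithinAt
    · rw [interior_Ioo]; exact hderivh
  intro t ht
  have hsT := hskpos t ht
  have hkey : h t ≤ L := by
    apply ge_of_tendsto hLtend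
    filter_upwards [Ioo_mem_nhdsGT_of_mem (Set.left_mem_Ico.2 ht.1)] with ε hε
    have hεT : ε ∈ Set.Ioo (0:ℝ) T := ⟨hε.1, lt_trans hε.2 ht.2⟩
    have hse := hskpos ε hεT
    have step1 : h t ≤ h ε := hanti hεT ht hε.2.le
    have hq := hψ' ε hεT
    have heq : (sk c ε) ^ 2 * (lam ε - N * deriv (sk c) ε / sk c ε)
        = (sk c ε) ^ 2 * lam ε - N * (sk c ε * skd c ε) := by
      rw [hderiv_sk]; field_simp
    rw [heq]
    have hhe : h ε = (sk c ε) ^ 2 * (lam ε - deriv ψ ε - a) - N * (sk c ε * skd c ε) := rfl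
    have hnn : 0 ≤ (sk c ε) ^ 2 * (deriv ψ ε + a) := mul_nonneg (sq_nonneg _) (by linarith)
    nlinarith [step1, hhe, hnn]
  have hht : h t ≤ 0 := le_trans hkey hL0
  rw [hderiv_sk]
  have hhteq : h t = (sk c t) ^ 2 * (lam t - deriv ψ t - a) - N * (sk c t * skd c t) := rfl
  have hht2 : (sk c t) ^ 2 * (lam t - deriv ψ t - a) ≤ N * (sk c t * skd c t) := by
    rw [hhteq] at hht; linarith
  have key2 : lam t - deriv ψ t - a ≤ N * skd c t / sk c t := by
    rw [le_div_iff₀ hsT]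
    nlinarith [hht2, hsT]
  linarith
end

section
/- Let c ≥ 0 and let Y : [0,T) → ℝⁿ be a C² function with Y(0) = 0 and Y(t) ≠ 0 for t ∈ (0,T), satisfying ⟨Y''(t), Y(t)⟩ ≥ c·|Y(t)|². Then for all t ∈ (0,T), the logarithmic derivative satisfies (d/dt) log |Y(t)|² ≥ 2·s_{−c}'(t)/s_{−c}(t). -/
/-!
Put `f = ‖Y‖`. Where `Y ≠ 0`, `f' = ⟪Y', Y⟫ / ‖Y‖` and, by Cauchy–Schwarz,
`f'' = (‖Y'‖² + ⟪Y'', Y⟫ - ⟪Y', Y⟫² / ‖Y‖²) / ‖Y‖ ≥ ⟪Y'', Y⟫ / ‖Y‖ ≥ c f`,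
while `s = s_{-c}` solves `s'' = c s` with `s > 0` on `(0, T)`. The Wronskian `f' s - f s'` then has
derivative `(f'' - c f) s ≥ 0`, and it tends to `0` at `0⁺` because `Y'` stays bounded there while
`s` and `f` vanish. Hence `f' / f ≥ s' / s`, and `(log ‖Y‖²)' = 2 f' / f`.
-/

open Real MeasureTheory Set

open Filter Topology
open scoped InnerProductSpace

section ComparisonFunction

variable {c : ℝ}

lemma sk_apply_zero (κ : ℝ) : sk κ 0 = 0 := by
  simp [sk]

lemma sk_zero : sk 0 = fun t => t := by
  funext t; simp [sk]

lemma sk_neg_of_pos (hc : 0 < c) : sk (-c) = fun t => sinh (√c * t) / √c := by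
  funext t
  simp [sk, not_lt.2 (neg_nonpos.2 hc.le), hc.ne']

lemma hasDerivAt_sk_neg (hc : 0 ≤ c) (t : ℝ) : HasDerivAt (sk (-c)) (cosh (√c * t)) t := by
  rcases hc.eq_or_lt with rfl | hpos
  · simpa [sk_zero] using hasDerivAt_id' t
  · rw [sk_neg_of_pos hpos]
    refine (((hasDerivAt_id' t).const_mul √c).sinh.div_const √c).congr_deriv ?_
    field_simp [(sqrt_pos.2 hpos).ne']

lemma hasDerivAt_cosh_sqrt_mul (hc : 0 ≤ c) (t : ℝ) :
    HasDerivAt (fun t => cosh (√c * t)) (c * sk (-c) t) t := by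
  refine ((hasDerivAt_id' t).const_mul √c).cosh.congr_deriv ?_
  rcases hc.eq_or_lt with rfl | hpos
  · simp
  · rw [sk_neg_of_pos hpos]
    field_simp [(sqrt_pos.2 hpos).ne']
    rw [sq_sqrt hc]
    ring

lemma sk_neg_pos (hc : 0 ≤ c) {t : ℝ} (ht : 0 < t) : 0 < sk (-c) t := by
  rcases hc.eq_or_lt with rfl | hpos
  · simpa [sk_zero] using ht
  · rw [sk_neg_of_pos hpos]
    exact div_pos (sinh_pos_iff.2 (mul_pos (sqrt_pos.2 hpos) ht)) (sqrt_pos.2 hpos)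

end ComparisonFunction

theorem sturm_comparison {f g h s σ : ℝ → ℝ} {a b c : ℝ}
    (hf : ∀ t ∈ Ioo a b, HasDerivAt f (g t) t) (hg : ∀ t ∈ Ioo a b, HasDerivAt g (h t) t)
    (hh : ∀ t ∈ Ioo a b, c * f t ≤ h t)
    (hs : ∀ t ∈ Ioo a b, HasDerivAt s (σ t) t) (hσ : ∀ t ∈ Ioo a b, HasDerivAt σ (c * s t) t)
    (hs_nonneg : ∀ t ∈ Ioo a b, 0 ≤ s t)
    (hlim : Tendsto (fun t => g t * s t - f t * σ t) (𝓝[>] a) (𝓝 0)) :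
    ∀ t ∈ Ioo a b, f t * σ t ≤ g t * s t := by
  set W := fun t => g t * s t - f t * σ t
  have hW : ∀ t ∈ Ioo a b, HasDerivAt W ((h t - c * f t) * s t) t := fun t ht =>
    (((hg t ht).mul (hs t ht)).sub ((hf t ht).mul (hσ t ht))).congr_deriv (by ring)
  have hmono : MonotoneOn W (Ioo a b) := by
    refine monotoneOn_of_hasDerivWithinAt_nonneg (f' := fun t => (h t - c * f t) * s t)
      (convex_Ioo a b) (fun t ht => (hW t ht).continuousAt.continuousWithinAt)
      (fun t ht => ?_) (fun t ht => ?_)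
    all_goals rw [interior_Ioo] at ht
    · exact (hW t ht).hasDerivWithinAt
    · exact mul_nonneg (sub_nonneg.2 (hh t ht)) (hs_nonneg t ht)
  intro t ht
  have hWt : 0 ≤ W t := le_of_tendsto hlim <| by
    filter_upwards [Ioo_mem_nhdsGT ht.1] with τ hτ
    exact hmono ⟨hτ.1, hτ.2.trans ht.2⟩ ht hτ.2.le
  exact sub_nonneg.1 hWt

section InnerProductSpace

variable {E : Type*} [NormedAddCommGroup E] [InnerProductSpace ℝ E]

lemma abs_inner_div_norm_le (v x : E) : |⟪v, x⟫_ℝ / ‖x‖| ≤ ‖v‖ := by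
  rw [abs_div, abs_norm]
  exact div_le_of_le_mul₀ (norm_nonneg _) (norm_nonneg _) (abs_real_inner_le_norm v x)

lemma mul_norm_le_of_mul_norm_sq_le_inner {c : ℝ} {x v a : E} (h : c * ‖x‖ ^ 2 ≤ ⟪a, x⟫_ℝ) :
    c * ‖x‖ ≤ (‖v‖ ^ 2 + ⟪a, x⟫_ℝ - ⟪v, x⟫_ℝ ^ 2 / ‖x‖ ^ 2) / ‖x‖ := by
  rcases eq_or_ne x 0 with rfl | hx
  · simp
  have hx : 0 < ‖x‖ := norm_pos_iff.2 hx
  have hCS : ⟪v, x⟫_ℝ ^ 2 / ‖x‖ ^ 2 ≤ ‖v‖ ^ 2 := by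
    rw [div_le_iff₀ (by positivity), ← mul_pow, sq_le_sq, abs_mul, abs_norm, abs_norm]
    exact abs_real_inner_le_norm v x
  rw [le_div_iff₀ hx]
  nlinarith

lemma HasDerivAt.norm_of_ne_zero {Y : ℝ → E} {Y' : E} {t : ℝ} (hY : HasDerivAt Y Y' t)
    (h0 : Y t ≠ 0) : HasDerivAt (fun τ => ‖Y τ‖) (⟪Y', Y t⟫_ℝ / ‖Y t‖) t := by
  have hsq : ‖Y t‖ ^ 2 ≠ 0 := by positivity
  have hsqrt := hY.norm_sq.sqrt hsq
  simp only [sqrt_sq (norm_nonneg _)] at hsqrt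
  refine hsqrt.congr_deriv ?_
  rw [real_inner_comm]
  field_simp

lemma HasDerivAt.inner_div_norm {Y Y' : ℝ → E} {Y'' : E} {t : ℝ} (hY : HasDerivAt Y (Y' t) t)
    (hY' : HasDerivAt Y' Y'' t) (h0 : Y t ≠ 0) :
    HasDerivAt (fun τ => ⟪Y' τ, Y τ⟫_ℝ / ‖Y τ‖)
      ((‖Y' t‖ ^ 2 + ⟪Y'', Y t⟫_ℝ - ⟪Y' t, Y t⟫_ℝ ^ 2 / ‖Y t‖ ^ 2) / ‖Y t‖) t := by
  have hn : ‖Y t‖ ≠ 0 := norm_ne_zero_iff.2 h0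
  refine ((hY'.inner ℝ hY).div (hY.norm_of_ne_zero h0) hn).congr_deriv ?_
  rw [real_inner_self_eq_norm_sq]
  field_simp

lemma HasDerivAt.log_norm_sq {Y : ℝ → E} {Y' : E} {t : ℝ} (hY : HasDerivAt Y Y' t)
    (h0 : Y t ≠ 0) :
    HasDerivAt (fun τ => Real.log (‖Y τ‖ ^ 2)) (2 * (⟪Y', Y t⟫_ℝ / ‖Y t‖) / ‖Y t‖) t := by
  have hn : ‖Y t‖ ≠ 0 := norm_ne_zero_iff.2 h0
  refine (hY.norm_sq.log (pow_ne_zero 2 hn)).congr_deriv ?_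
  rw [real_inner_comm]
  field_simp

lemma tendsto_norm_deriv_nhdsGT {Y : ℝ → E} {a b : ℝ} (hab : a < b)
    (hY : ContDiffOn ℝ 1 Y (Ico a b)) :
    Tendsto (fun τ => ‖deriv Y τ‖) (𝓝[>] a) (𝓝 ‖derivWithin Y (Ico a b) a‖) := by
  have hcont := (hY.continuousOn_derivWithin (uniqueDiffOn_Ico a b) le_rfl a
    (left_mem_Ico.2 hab)).norm
  rw [ContinuousWithinAt, nhdsWithin_Ico_eq_nhdsGE hab] at hcont
  refine (hcont.mono_left (nhdsWithin_mono _ Ioi_subset_Ici_self)).congr' ?_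
  filter_upwards [Ioo_mem_nhdsGT hab] with τ hτ
  rw [derivWithin_of_mem_nhds (Ico_mem_nhds hτ.1 hτ.2)]

lemma tendsto_wronskian_nhdsGT {Y : ℝ → E} {s σ : ℝ → ℝ} {a b : ℝ} (hab : a < b)
    (hY : ContDiffOn ℝ 1 Y (Ico a b)) (hYa : Y a = 0) (hs : ContinuousAt s a) (hsa : s a = 0)
    (hσ : ContinuousAt σ a) :
    Tendsto (fun τ => ⟪deriv Y τ, Y τ⟫_ℝ / ‖Y τ‖ * s τ - ‖Y τ‖ * σ τ) (𝓝[>] a) (𝓝 0) := by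
  have hYlim : Tendsto (fun τ => ‖Y τ‖) (𝓝[>] a) (𝓝 0) := by
    have := (hY.continuousOn.continuousWithinAt (left_mem_Ico.2 hab)).norm
    rw [ContinuousWithinAt, nhdsWithin_Ico_eq_nhdsGE hab, hYa, norm_zero] at this
    exact this.mono_left (nhdsWithin_mono _ Ioi_subset_Ici_self)
  have hslim : Tendsto (fun τ => |s τ|) (𝓝[>] a) (𝓝 0) := by
    simpa [hsa] using hs.tendsto.abs.mono_left nhdsWithin_le_nhds
  have hfirst : Tendsto (fun τ => ⟪deriv Y τ, Y τ⟫_ℝ / ‖Y τ‖ * s τ) (𝓝[>] a) (𝓝 0) := by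
    refine squeeze_zero_norm (fun τ => ?_)
      (by simpa using (tendsto_norm_deriv_nhdsGT hab hY).mul hslim)
    rw [norm_mul, Real.norm_eq_abs, Real.norm_eq_abs]
    exact mul_le_mul_of_nonneg_right (abs_inner_div_norm_le _ _) (abs_nonneg _)
  simpa using hfirst.sub (hYlim.mul (hσ.tendsto.mono_left nhdsWithin_le_nhds))

end InnerProductSpace

/-- Logarithmic derivative bound for Jacobi fields in Günther's theorem. -/
theorem stmt_13 (n : ℕ) (c T : ℝ) (hc : 0 ≤ c) (hT : 0 < T)
    (Y : ℝ → EuclideanSpace ℝ (Fin n))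
    (hY_C2 : ContDiffOn ℝ 2 Y (Set.Ico 0 T))
    (hY0 : Y 0 = 0) (hYne : ∀ t ∈ Set.Ioo 0 T, Y t ≠ 0)
    (hineq : ∀ t ∈ Set.Ioo 0 T,
      c * ‖Y t‖ ^ 2 ≤ inner ℝ (deriv (deriv Y) t) (Y t)) :
    ∀ t ∈ Set.Ioo 0 T,
      2 * deriv (sk (-c)) t / sk (-c) t ≤
        deriv (fun s => Real.log (‖Y s‖ ^ 2)) t := by
  have hC2 : ContDiffOn ℝ 2 Y (Ioo 0 T) := hY_C2.mono Ioo_subset_Ico_self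
  have hY' : ∀ τ ∈ Ioo 0 T, HasDerivAt Y (deriv Y τ) τ := fun τ hτ =>
    ((hC2.differentiableOn two_ne_zero).differentiableAt (isOpen_Ioo.mem_nhds hτ)).hasDerivAt
  have hY'' : ∀ τ ∈ Ioo 0 T, HasDerivAt (deriv Y) (deriv (deriv Y) τ) τ := fun τ hτ =>
    (((hC2.deriv_of_isOpen isOpen_Ioo (by norm_num)).differentiableOn one_ne_zero).differentiableAt
      (isOpen_Ioo.mem_nhds hτ)).hasDerivAt
  have hW := sturm_comparison (fun τ hτ => (hY' τ hτ).norm_of_ne_zero (hYne τ hτ))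
    (fun τ hτ => (hY' τ hτ).inner_div_norm (hY'' τ hτ) (hYne τ hτ))
    (fun τ hτ => mul_norm_le_of_mul_norm_sq_le_inner (hineq τ hτ))
    (fun τ _ => hasDerivAt_sk_neg hc τ) (fun τ _ => hasDerivAt_cosh_sqrt_mul hc τ)
    (fun τ hτ => (sk_neg_pos hc hτ.1).le)
    (tendsto_wronskian_nhdsGT hT (hY_C2.of_le one_le_two) hY0
      (hasDerivAt_sk_neg hc 0).continuousAt (sk_apply_zero _) (by fun_prop))
  intro t ht
  rw [(hasDerivAt_sk_neg hc t).deriv, ((hY' t ht).log_norm_sq (hYne t ht)).deriv,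
    div_le_div_iff₀ (sk_neg_pos hc ht.1) (norm_pos_iff.2 (hYne t ht))]
  linarith [hW t ht]
end
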